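/- For all u, v, w ∈ ℝ⁷ ≅ Im ℍ × ℍ the octonionic cross product satisfies the Clifford-type anticommutation identity u × (v × w) + v × (u × w) = −2⟨u,v⟩ w + ⟨u,w⟩ v + ⟨v,w⟩ u. -/

import Mathlib

/-! The identity is the polarization, in `u`, of the double cross product formula
`u × (u × w) = -|u|² w + ⟨u, w⟩ u` for imaginary `u` and `w`, which is a direct
computation in quaternion coordinates; polarizing is legitimate because `×` and `⟨·,·⟩` are
bilinear and `⟨·,·⟩` is symmetric. -/

noncomputable section

/-- The Euclidean inner product on `ℝ⁷ ≅ Im ℍ × ℍ`: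
`⟨(a,b),(c,d)⟩ = Re(a c*) + Re(b d*)`. -/
def oinner (x y : Quaternion ℝ × Quaternion ℝ) : ℝ :=
  (x.1 * star y.1).re + (x.2 * star y.2).re

/-- The octonionic cross product on `ℝ⁷ ≅ Im ℍ × ℍ` (Cayley–Dickson):
`(a,b) × (c,d) = (Im(a c − d* b), d a + b c*)`. -/
def ocross (x y : Quaternion ℝ × Quaternion ℝ) : Quaternion ℝ × Quaternion ℝ :=
  ((x.1 * y.1 - star y.2 * x.2).im, y.2 * x.1 + x.2 * star y.1)

open scoped RealInnerProductSpace

lemma oinner_eq_inner_add_inner (x y : Quaternion ℝ × Quaternion ℝ) :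
    oinner x y = ⟪x.1, y.1⟫ + ⟪x.2, y.2⟫ := by
  simp only [oinner, Quaternion.inner_def]

lemma oinner_comm (x y : Quaternion ℝ × Quaternion ℝ) : oinner x y = oinner y x := by
  simp only [oinner_eq_inner_add_inner, real_inner_comm]

lemma oinner_add_left (x y z : Quaternion ℝ × Quaternion ℝ) :
    oinner (x + y) z = oinner x z + oinner y z := by
  simp only [oinner_eq_inner_add_inner, Prod.fst_add, Prod.snd_add, inner_add_left]
  ring

lemma oinner_add_right (x y z : Quaternion ℝ × Quaternion ℝ) :
    oinner x (y + z) = oinner x y + oinner x z := by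
  rw [oinner_comm, oinner_add_left, oinner_comm y, oinner_comm z]

lemma ocross_add_left (x y z : Quaternion ℝ × Quaternion ℝ) :
    ocross (x + y) z = ocross x z + ocross y z := by
  ext1 <;> simp only [ocross, Prod.fst_add, Prod.snd_add, mul_add, add_mul,
    Quaternion.im_add, Quaternion.im_sub] <;> abel

lemma ocross_add_right (x y z : Quaternion ℝ × Quaternion ℝ) :
    ocross x (y + z) = ocross x y + ocross x z := by
  ext1 <;> simp only [ocross, Prod.fst_add, Prod.snd_add, star_add, mul_add, add_mul,
    Quaternion.im_add, Quaternion.im_sub] <;> abel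

lemma ocross_ocross_self (u w : Quaternion ℝ × Quaternion ℝ)
    (hu : u.1.re = 0) (hw : w.1.re = 0) :
    ocross u (ocross u w) = (-oinner u u) • w + oinner u w • u := by
  ext <;>
    simp only [ocross, oinner, Prod.fst_add, Prod.snd_add, Prod.smul_fst, Prod.smul_snd,
      Quaternion.re_mul, Quaternion.imI_mul, Quaternion.imJ_mul, Quaternion.imK_mul,
      Quaternion.re_add, Quaternion.imI_add, Quaternion.imJ_add, Quaternion.imK_add,
      Quaternion.imI_sub, Quaternion.imJ_sub, Quaternion.imK_sub,
      Quaternion.re_im, Quaternion.imI_im, Quaternion.imJ_im, Quaternion.imK_im,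
      Quaternion.re_smul, Quaternion.imI_smul, Quaternion.imJ_smul, Quaternion.imK_smul,
      Quaternion.re_star, Quaternion.imI_star, Quaternion.imJ_star, Quaternion.imK_star,
      smul_eq_mul, hu, hw] <;>
    ring

/-- the Clifford-type anticommutation identity
`u × (v × w) + v × (u × w) = −2⟨u,v⟩ w + ⟨u,w⟩ v + ⟨v,w⟩ u`. -/
theorem ocross_clifford_anticommutation
    (u v w : Quaternion ℝ × Quaternion ℝ)
    (hu : u.1.re = 0) (hv : v.1.re = 0) (hw : w.1.re = 0) :
    ocross u (ocross v w) + ocross v (ocross u w) =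
      (-2 * oinner u v) • w + oinner u w • v + oinner v w • u := by
  have huv : (u + v).1.re = 0 := by simp [hu, hv]
  have h := ocross_ocross_self (u + v) w huv hw
  rw [ocross_add_left, ocross_add_left, ocross_add_right, ocross_add_right,
    ocross_ocross_self u w hu hw, ocross_ocross_self v w hv hw, oinner_add_left,
    oinner_add_right, oinner_add_right, oinner_add_left, oinner_comm v u] at h
  linear_combination (norm := module) h
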